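/- Let (κ_n) and (v_n) be sequences with κ_n ≥ 0 and v_n > 0 for all n, and set d1_n := −κ_n/v_n + v_n/2. If v_n → 0 as n → ∞, then C_BS(κ_n, v_n) ~ (−U′(−d1_n)) · φ(d1_n) · v_n, i.e. the ratio of the two sides tends to 1. -/

import Mathlib

open MeasureTheory Filter Topology

/-- Standard normal density `φ(z) = e^{-z²/2}/√(2π)`. -/
noncomputable def stdPDF (z : ℝ) : ℝ := Real.exp (-(z^2)/2) / Real.sqrt (2*Real.pi)

/-- Standard normal distribution function `Φ(z) = ∫_{-∞}^z φ(t) dt`. -/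
noncomputable def stdCDF (z : ℝ) : ℝ := ∫ t in Set.Iic z, stdPDF t

/-- Black–Scholes call price `C_BS(κ,v) = Φ(d1) - e^κ Φ(d2)` with
`d1 = -κ/v + v/2`, `d2 = -κ/v - v/2`. -/
noncomputable def CBS (κ v : ℝ) : ℝ :=
  stdCDF (-κ/v + v/2) - Real.exp κ * stdCDF (-κ/v - v/2)

/-- Mills ratio `U(z) = Φ(-z)/φ(z)`. -/
noncomputable def mills (z : ℝ) : ℝ := stdCDF (-z) / stdPDF z

/-!
With `z = κ/v - v/2` one has `d1 = -z` and `e^κ φ(z + v) = φ(z)`, so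
`C_BS(κ, v) = φ(z) (U(z) - U(z + v))`, and by the mean value theorem the ratio in question is
`(U(z) - U(z + v)) / (-U'(z) v) = U'(ξ) / U'(z)` for some `ξ ∈ (z, z + v)`.
Comparing `U` with sub- and supersolutions of `U' = zU - 1` gives `z / (1 + z²) < U(z)`, and
`U(z) < 1 / (z + 1) + 1 / (z + 1)²` for `z > -1`. The first bound says that `U'` is increasing,
the second that `e^{2z} U'(z)` is decreasing on `(-1, ∞)`. Hence the ratio lies in `[e^{-2v}, 1]`
as soon as `z > -1`, which holds for `v < 2` because `κ ≥ 0`.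
-/

open Set

lemma StrictMonoOn.lt_of_tendsto_atTop {α β : Type*} [LinearOrder α] [NoMaxOrder α]
    [TopologicalSpace β] [Preorder β] [OrderClosedTopology β] {f : α → β} {a x : α} {l : β}
    (hf : StrictMonoOn f (Ioi a)) (hlim : Tendsto f atTop (𝓝 l)) (hx : a < x) : f x < l := by
  have : Nonempty α := ⟨a⟩
  obtain ⟨y, hxy⟩ := exists_gt x
  have hy : a < y := hx.trans hxy
  refine (hf hx hy hxy).trans_le (ge_of_tendsto hlim ?_)
  filter_upwards [eventually_ge_atTop y] with t hyt
  exact hf.monotoneOn hy (hy.trans_le hyt) hyt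

lemma strictMonoOn_Ioi_of_hasDerivAt_pos {f f' : ℝ → ℝ} {a : ℝ}
    (hf : ∀ x, a < x → HasDerivAt f (f' x) x) (hf' : ∀ x, a < x → 0 < f' x) :
    StrictMonoOn f (Ioi a) :=
  strictMonoOn_of_hasDerivWithinAt_pos (convex_Ioi a)
    (fun x hx => (hf x hx).continuousAt.continuousWithinAt)
    (fun x hx => (hf x (by simpa using hx)).hasDerivWithinAt)
    (fun x hx => hf' x (by simpa using hx))

lemma stdPDF_pos (z : ℝ) : 0 < stdPDF z :=
  div_pos (Real.exp_pos _) (Real.sqrt_pos.2 (by positivity))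

lemma stdPDF_neg (z : ℝ) : stdPDF (-z) = stdPDF z := by simp [stdPDF]

lemma continuous_stdPDF : Continuous stdPDF := by
  unfold stdPDF; fun_prop

lemma hasDerivAt_stdPDF (z : ℝ) : HasDerivAt stdPDF (-z * stdPDF z) z := by
  have h : HasDerivAt (fun x : ℝ => -(x ^ 2) / 2) (-z) z :=
    ((hasDerivAt_pow 2 z).neg.div_const 2).congr_deriv (by norm_num; ring)
  refine (h.exp.div_const (Real.sqrt (2 * Real.pi))).congr_deriv ?_
  simp only [stdPDF]
  ring

lemma integrable_stdPDF : Integrable stdPDF := by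
  refine ((integrable_exp_neg_mul_sq (by norm_num : (0 : ℝ) < 1 / 2)).div_const
    (Real.sqrt (2 * Real.pi))).congr (Eventually.of_forall fun x => ?_)
  simp only [stdPDF]
  ring_nf

lemma tendsto_stdPDF_atTop : Tendsto stdPDF atTop (𝓝 0) := by
  have hsq : Tendsto (fun z : ℝ => -(z ^ 2) / 2) atTop atBot :=
    (tendsto_neg_atBot_iff.2 (tendsto_pow_atTop two_ne_zero)).atBot_div_const two_pos
  have h := (Real.tendsto_exp_atBot.comp hsq).div_const (Real.sqrt (2 * Real.pi))
  rwa [zero_div] at h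

lemma stdCDF_sub_stdCDF (a b : ℝ) : stdCDF b - stdCDF a = ∫ t in a..b, stdPDF t := by
  unfold stdCDF
  exact intervalIntegral.integral_Iic_sub_Iic integrable_stdPDF.integrableOn
    integrable_stdPDF.integrableOn

lemma stdCDF_nonneg (z : ℝ) : 0 ≤ stdCDF z :=
  setIntegral_nonneg measurableSet_Iic fun t _ => (stdPDF_pos t).le

lemma hasDerivAt_stdCDF (z : ℝ) : HasDerivAt stdCDF (stdPDF z) z := by
  have h := (intervalIntegral.integral_hasDerivAt_right (a := 0) (b := z)
    integrable_stdPDF.intervalIntegrable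
    continuous_stdPDF.aestronglyMeasurable.stronglyMeasurableAtFilter
    continuous_stdPDF.continuousAt).const_add (stdCDF 0)
  refine h.congr_of_eventuallyEq (Eventually.of_forall fun x => ?_)
  simp only [← stdCDF_sub_stdCDF]
  ring

lemma tendsto_stdCDF_neg_atTop : Tendsto (fun z : ℝ => stdCDF (-z)) atTop (𝓝 0) := by
  have h := tendsto_setIntegral_of_antitone (μ := volume) (f := stdPDF)
    (s := fun x : ℝ => Iic (-x)) (fun _ => measurableSet_Iic)
    (fun a b hab => Iic_subset_Iic.2 (neg_le_neg hab)) ⟨0, integrable_stdPDF.integrableOn⟩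
  have hempty : (⋂ x : ℝ, Iic (-x)) = ∅ :=
    eq_empty_of_forall_notMem fun t ht => by
      have := mem_iInter.1 ht (-t + 1)
      simp only [mem_Iic] at this
      linarith
  simpa [hempty, stdCDF] using h

lemma stdPDF_mul_mills (z : ℝ) : stdPDF z * mills z = stdCDF (-z) :=
  mul_div_cancel₀ _ (stdPDF_pos z).ne'

lemma mills_nonneg (z : ℝ) : 0 ≤ mills z :=
  div_nonneg (stdCDF_nonneg _) (stdPDF_pos z).le

lemma hasDerivAt_mills (z : ℝ) : HasDerivAt mills (z * mills z - 1) z := by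
  have hΦ : HasDerivAt (fun x => stdCDF (-x)) (-stdPDF z) z :=
    ((hasDerivAt_stdCDF (-z)).comp z (hasDerivAt_neg z)).congr_deriv (by rw [stdPDF_neg]; ring)
  refine (hΦ.div (hasDerivAt_stdPDF z) (stdPDF_pos z).ne').congr_deriv ?_
  have hφ := (stdPDF_pos z).ne'
  simp only [mills]
  field_simp
  ring

lemma deriv_mills (z : ℝ) : deriv mills z = z * mills z - 1 :=
  (hasDerivAt_mills z).deriv

lemma hasDerivAt_stdPDF_mul_mills_sub {q : ℝ → ℝ} {q' x : ℝ} (hq : HasDerivAt q q' x) :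
    HasDerivAt (fun x => stdPDF x * (mills x - q x)) (stdPDF x * (x * q x - 1 - q')) x := by
  refine ((hasDerivAt_stdPDF x).mul ((hasDerivAt_mills x).sub hq)).congr_deriv ?_
  simp only [Pi.sub_apply]
  ring

lemma tendsto_stdPDF_mul_mills_sub {q : ℝ → ℝ} (hq : Tendsto q atTop (𝓝 0)) :
    Tendsto (fun x => stdPDF x * (mills x - q x)) atTop (𝓝 0) := by
  have h := tendsto_stdCDF_neg_atTop.sub (tendsto_stdPDF_atTop.mul hq)
  rw [mul_zero, sub_zero] at h
  refine h.congr fun x => ?_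
  rw [mul_sub, stdPDF_mul_mills]

/-- A supersolution `q` of `U' = zU - 1` vanishing at `+∞` dominates `U`: `φ (U - q)` is then
strictly increasing with limit `0`. -/
lemma mills_lt_of_hasDerivAt_lt {q q' : ℝ → ℝ} {a x : ℝ}
    (hq : ∀ y, a < y → HasDerivAt q (q' y) y) (hq' : ∀ y, a < y → q' y < y * q y - 1)
    (hlim : Tendsto q atTop (𝓝 0)) (hx : a < x) : mills x < q x := by
  have hmono : StrictMonoOn (fun x => stdPDF x * (mills x - q x)) (Ioi a) :=
    strictMonoOn_Ioi_of_hasDerivAt_pos (fun y hy => hasDerivAt_stdPDF_mul_mills_sub (hq y hy))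
      (fun y hy => mul_pos (stdPDF_pos y) (by linarith [hq' y hy]))
  have h := hmono.lt_of_tendsto_atTop (tendsto_stdPDF_mul_mills_sub hlim) hx
  linarith [neg_of_mul_neg_right h (stdPDF_pos x).le]

lemma lt_mills_of_lt_hasDerivAt {q q' : ℝ → ℝ} {a x : ℝ}
    (hq : ∀ y, a < y → HasDerivAt q (q' y) y) (hq' : ∀ y, a < y → y * q y - 1 < q' y)
    (hlim : Tendsto q atTop (𝓝 0)) (hx : a < x) : q x < mills x := by
  have hmono : StrictMonoOn (fun x => -(stdPDF x * (mills x - q x))) (Ioi a) :=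
    strictMonoOn_Ioi_of_hasDerivAt_pos
      (fun y hy => (hasDerivAt_stdPDF_mul_mills_sub (hq y hy)).neg)
      (fun y hy => neg_pos.2 (mul_neg_of_pos_of_neg (stdPDF_pos y) (by linarith [hq' y hy])))
  have h := hmono.lt_of_tendsto_atTop (by simpa using (tendsto_stdPDF_mul_mills_sub hlim).neg) hx
  linarith [pos_of_mul_pos_right (neg_lt_zero.1 h) (stdPDF_pos x).le]

lemma div_one_add_sq_lt_mills (z : ℝ) : z / (1 + z ^ 2) < mills z := by
  refine lt_mills_of_lt_hasDerivAt (a := z - 1) (q := fun y => y / (1 + y ^ 2))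
    (q' := fun y => (1 - y ^ 2) / (1 + y ^ 2) ^ 2)
    (fun y _ => ?_) (fun y _ => ?_) ?_ (by linarith)
  · have hy : 1 + y ^ 2 ≠ 0 := by positivity
    refine ((hasDerivAt_id' y).div ((hasDerivAt_pow 2 y).const_add 1) hy).congr_deriv ?_
    field_simp
    ring
  · rw [← sub_pos]
    have : 0 < 1 + y ^ 2 := by positivity
    field_simp
    ring_nf
    positivity
  · have h : Tendsto (fun y : ℝ => y + y⁻¹) atTop atTop :=
      tendsto_atTop_add_right_of_le' _ 0 tendsto_id
        ((eventually_gt_atTop 0).mono fun y hy => inv_nonneg.2 hy.le)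
    refine h.inv_tendsto_atTop.congr' ((eventually_gt_atTop 0).mono fun y hy => ?_)
    simp only [Pi.inv_apply]
    field_simp
    ring

lemma mills_lt_of_neg_one_lt {z : ℝ} (hz : -1 < z) :
    mills z < (z + 1)⁻¹ + (z + 1)⁻¹ ^ 2 := by
  refine mills_lt_of_hasDerivAt_lt (a := -1) (q := fun y => (y + 1)⁻¹ + (y + 1)⁻¹ ^ 2)
    (q' := fun y => -(y + 1)⁻¹ ^ 2 - 2 * (y + 1)⁻¹ ^ 3)
    (fun y hy => ?_) (fun y hy => ?_) ?_ hz
  · have hy : y + 1 ≠ 0 := by linarith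
    have hu := ((hasDerivAt_id' y).add_const 1).inv hy
    refine (hu.add (hu.pow 2)).congr_deriv ?_
    simp only [Pi.inv_apply, Nat.cast_ofNat, Nat.add_one_sub_one, pow_one]
    field_simp
    ring
  · have hy : 0 < y + 1 := by linarith
    have hxq : y * ((y + 1)⁻¹ + (y + 1)⁻¹ ^ 2) - 1 = -(y + 1)⁻¹ ^ 2 := by
      field_simp
      ring
    rw [hxq]
    have : 0 < (y + 1)⁻¹ ^ 3 := by positivity
    linarith
  · have hu : Tendsto (fun y : ℝ => (y + 1)⁻¹) atTop (𝓝 0) :=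
      tendsto_inv_atTop_zero.comp (tendsto_atTop_add_const_right _ 1 tendsto_id)
    simpa using hu.add (hu.pow 2)

lemma hasDerivAt_deriv_mills (z : ℝ) :
    HasDerivAt (deriv mills) ((1 + z ^ 2) * mills z - z) z := by
  rw [show deriv mills = fun x => x * mills x - 1 from funext deriv_mills]
  refine (((hasDerivAt_id' z).mul (hasDerivAt_mills z)).sub_const 1).congr_deriv ?_
  ring

lemma deriv_mills_neg (z : ℝ) : deriv mills z < 0 := by
  rw [deriv_mills, sub_neg]
  rcases le_or_gt z 0 with hz | hz
  · linarith [mul_nonpos_of_nonpos_of_nonneg hz (mills_nonneg z)]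
  · have h := mul_lt_mul_of_pos_left (mills_lt_of_neg_one_lt (by linarith : -1 < z)) hz
    have hz1 : z * ((z + 1)⁻¹ + (z + 1)⁻¹ ^ 2) = 1 - (z + 1)⁻¹ ^ 2 := by
      field_simp
      ring
    have : 0 < (z + 1)⁻¹ ^ 2 := by positivity
    linarith

lemma strictMono_deriv_mills : StrictMono (deriv mills) :=
  strictMono_of_hasDerivAt_pos hasDerivAt_deriv_mills fun z => by
    have h := div_one_add_sq_lt_mills z
    rw [div_lt_iff₀ (by positivity)] at h
    linarith

lemma strictAntiOn_exp_mul_deriv_mills :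
    StrictAntiOn (fun x => Real.exp (2 * x) * deriv mills x) (Ioi (-1)) := by
  have hderiv : ∀ x, HasDerivAt (fun x => Real.exp (2 * x) * deriv mills x)
      (Real.exp (2 * x) * ((x + 1) ^ 2 * mills x - (x + 2))) x := fun x => by
    refine (((hasDerivAt_id' x).const_mul 2).exp.mul (hasDerivAt_deriv_mills x)).congr_deriv ?_
    rw [deriv_mills]
    ring
  refine strictAntiOn_of_hasDerivWithinAt_neg (convex_Ioi _)
    (fun x _ => (hderiv x).continuousAt.continuousWithinAt)
    (fun x _ => (hderiv x).hasDerivWithinAt) fun x hx => ?_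
  rw [interior_Ioi, mem_Ioi] at hx
  refine mul_neg_of_pos_of_neg (Real.exp_pos _) ?_
  have h := mills_lt_of_neg_one_lt hx
  have hx1 : 0 < x + 1 := by linarith
  have hq : (x + 1) ^ 2 * ((x + 1)⁻¹ + (x + 1)⁻¹ ^ 2) = x + 2 := by
    field_simp
    ring
  nlinarith [mul_lt_mul_of_pos_left h (by positivity : 0 < (x + 1) ^ 2)]

lemma mills_sub_mills_div_mem_Icc {z w : ℝ} (hz : -1 < z) (hw : 0 < w) :
    (mills z - mills (z + w)) / (-deriv mills z * w) ∈ Icc (Real.exp (-(2 * w))) 1 := by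
  obtain ⟨ξ, ⟨hzξ, hξw⟩, hslope⟩ := exists_hasDerivAt_eq_slope mills (deriv mills)
    (lt_add_of_pos_right z hw) (fun x _ => (hasDerivAt_mills x).continuousAt.continuousWithinAt)
    fun x _ => (hasDerivAt_mills x).differentiableAt.hasDerivAt
  rw [add_sub_cancel_left] at hslope
  have hratio :
      (mills z - mills (z + w)) / (-deriv mills z * w) = deriv mills ξ / deriv mills z := by
    rw [hslope]
    field_simp
    ring
  have hdecay : Real.exp (2 * (z + w)) * deriv mills (z + w) ≤ Real.exp (2 * z) * deriv mills z :=
    strictAntiOn_exp_mul_deriv_mills.antitoneOn hz (mem_Ioi.2 (by linarith)) (by linarith)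
  rw [mul_add, Real.exp_add, mul_assoc, mul_le_mul_iff_right₀ (Real.exp_pos _)] at hdecay
  have hneg := deriv_mills_neg z
  rw [hratio, mem_Icc, le_div_iff_of_neg hneg, div_le_one_of_neg hneg]
  refine ⟨?_, (strictMono_deriv_mills hzξ).le⟩
  calc deriv mills ξ ≤ deriv mills (z + w) := (strictMono_deriv_mills hξw).le
    _ ≤ Real.exp (-(2 * w)) * deriv mills z := by
      rw [Real.exp_neg, ← div_eq_inv_mul, le_div_iff₀ (Real.exp_pos _), mul_comm]
      exact hdecay

lemma CBS_eq_stdPDF_mul_mills_sub (k : ℝ) {w : ℝ} (hw : w ≠ 0) :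
    CBS k w = stdPDF (k / w - w / 2) * (mills (k / w - w / 2) - mills (k / w - w / 2 + w)) := by
  set z := k / w - w / 2 with hz
  have hd1 : -k / w + w / 2 = -z := by rw [hz]; ring
  have hd2 : -k / w - w / 2 = -(z + w) := by rw [hz]; ring
  have hsymm : Real.exp k * stdPDF (z + w) = stdPDF z := by
    simp only [stdPDF]
    rw [← mul_div_assoc, ← Real.exp_add, hz]
    congr 2
    field_simp
    ring
  rw [CBS, hd1, hd2, ← stdPDF_mul_mills, ← stdPDF_mul_mills, ← mul_assoc, hsymm]
  ring

/-- **Black–Scholes asymptotics when `v → 0`.** For `κ n ≥ 0`, `v n > 0`, with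
`d1_n = -κ n/v n + v n/2` and `v n → 0`, one has
`C_BS(κ n, v n) ~ (-U'(-d1_n)) · φ(d1_n) · v n`. -/
theorem CBS_asymptotics_v_to_zero
    (κ v : ℕ → ℝ) (hκ : ∀ n, 0 ≤ κ n) (hv : ∀ n, 0 < v n)
    (d1 : ℕ → ℝ) (hd1 : ∀ n, d1 n = -(κ n) / v n + v n / 2)
    (hv0 : Tendsto v atTop (𝓝 0)) :
    Tendsto (fun n => CBS (κ n) (v n) /
        ((-(deriv mills (-(d1 n)))) * stdPDF (d1 n) * v n))
      atTop (𝓝 1) := by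
  set z : ℕ → ℝ := fun n => κ n / v n - v n / 2 with hz
  have hratio : ∀ n, CBS (κ n) (v n) / (-deriv mills (-d1 n) * stdPDF (d1 n) * v n) =
      (mills (z n) - mills (z n + v n)) / (-deriv mills (z n) * v n) := fun n => by
    have hd1z : d1 n = -z n := by rw [hd1, hz]; ring
    rw [CBS_eq_stdPDF_mul_mills_sub _ (hv n).ne', hd1z, neg_neg, stdPDF_neg,
      mul_comm _ (stdPDF _), mul_assoc, mul_div_mul_left _ _ (stdPDF_pos _).ne']
  have hmem : ∀ᶠ n in atTop, CBS (κ n) (v n) / (-deriv mills (-d1 n) * stdPDF (d1 n) * v n) ∈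
      Icc (Real.exp (-(2 * v n))) 1 := by
    filter_upwards [hv0.eventually (gt_mem_nhds two_pos)] with n hn
    rw [hratio]
    have hz1 : -1 < κ n / v n - v n / 2 := by linarith [div_nonneg (hκ n) (hv n).le]
    exact mills_sub_mills_div_mem_Icc hz1 (hv n)
  have hlow : Tendsto (fun n => Real.exp (-(2 * v n))) atTop (𝓝 1) := by
    simpa using ((hv0.const_mul 2).neg).rexp
  exact tendsto_of_tendsto_of_tendsto_of_le_of_le' hlow tendsto_const_nhds
    (hmem.mono fun _ h => h.1) (hmem.mono fun _ h => h.2)
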